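/- For every j ∈ ℕ, every k ∈ ℕ with k ≥ 1 and every ℓ ∈ ℕ there exists C > 0 such that for all t ≥ 1 and all x ∈ ℝ \ {0}: |∂_x^j g_{t,k}(x)| ≤ C ( |x|^{-j} t^{-(ℓ+1/2)} (|x|/√t)^{-k} + t^{-(ℓ + j/2 + 1/2)} (|x|/√t)^{-k} ). -/

import Mathlib

/-- `φ(t,θ) = e^{-2t(1-cos θ)}`. -/
noncomputable def phiFn (t θ : ℝ) : ℝ := Real.exp (-2 * t * (1 - Real.cos θ))

/-- The mixed partial derivative `∂_θ^k ∂_t^ℓ φ (t,θ)`. -/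
noncomputable def phiMixedDeriv (k ℓ : ℕ) (t θ : ℝ) : ℝ :=
  iteratedDeriv k (fun θ' => iteratedDeriv ℓ (fun t' => phiFn t' θ') t) θ

/-- `Φ_k(θ) = sin θ` if `k` is odd and `cos θ` if `k` is even. -/
noncomputable def PhiFn (k : ℕ) (θ : ℝ) : ℝ :=
  if k % 2 = 1 then Real.sin θ else Real.cos θ

/-- For fixed `ℓ ∈ ℕ`, `k ≥ 1`, `t > 0`:
`g_{t,k}(x) = ((-1)^⌊(k+1)/2⌋ / (π x^k)) ∫_0^π (∂_θ^k ∂_t^ℓ φ)(t,θ) Φ_k(xθ) dθ`. -/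
noncomputable def gFn (ℓ k : ℕ) (t x : ℝ) : ℝ :=
  ((-1 : ℝ) ^ ((k + 1) / 2) / (Real.pi * x ^ k)) *
    ∫ θ in (0:ℝ)..Real.pi, phiMixedDeriv k ℓ t θ * PhiFn k (x * θ)

open Real MeasureTheory intervalIntegral

/-! ### Generic list lemmas -/

lemma hasDerivAt_list_sum {α : Type*} (L : List α) (f : α → ℝ → ℝ) (f' : α → ℝ) (x : ℝ)
    (h : ∀ a ∈ L, HasDerivAt (f a) (f' a) x) :
    HasDerivAt (fun y => (L.map (fun a => f a y)).sum) ((L.map f').sum) x := by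
  induction L with
  | nil => simpa using hasDerivAt_const x (0:ℝ)
  | cons a l ih =>
    simp only [List.map_cons, List.sum_cons]
    exact (h a (by simp)).add (ih (fun b hb => h b (by simp [hb])))

lemma list_bind_sum {α β : Type*} (L : List α) (e : α → List β) (v : β → ℝ) :
    ((L.flatMap e).map v).sum = (L.map (fun a => ((e a).map v).sum)).sum := by
  induction L with
  | nil => simp
  | cons a l ih => simp [ih]

lemma list_abs_sum_le {α : Type*} (L : List α) (v w : α → ℝ) (h : ∀ a ∈ L, |v a| ≤ w a) :
    |(L.map v).sum| ≤ (L.map w).sum := by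
  induction L with
  | nil => simp
  | cons a l ih =>
    simp only [List.map_cons, List.sum_cons]
    refine (abs_add_le _ _).trans (add_le_add (h a (by simp)) (ih (fun b hb => h b (by simp [hb]))))

lemma list_sum_le {α : Type*} (L : List α) (v w : α → ℝ) (h : ∀ a ∈ L, v a ≤ w a) :
    (L.map v).sum ≤ (L.map w).sum := by
  induction L with
  | nil => simp
  | cons a l ih =>
    simp only [List.map_cons, List.sum_cons]
    exact add_le_add (h a (by simp)) (ih (fun b hb => h b (by simp [hb])))

lemma myContinuous_list_sum {α : Type*} (L : List α) (f : α → ℝ → ℝ)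
    (h : ∀ a ∈ L, Continuous (f a)) :
    Continuous (fun y => (L.map (fun a => f a y)).sum) := by
  induction L with
  | nil => simpa using continuous_const
  | cons a l ih =>
    simp only [List.map_cons, List.sum_cons]
    exact (h a (by simp)).add (ih (fun b hb => h b (by simp [hb])))

lemma intervalIntegrable_list_sum {α : Type*} (L : List α) (f : α → ℝ → ℝ) (a b : ℝ)
    (h : ∀ c ∈ L, IntervalIntegrable (f c) volume a b) :
    IntervalIntegrable (fun x => (L.map (fun c => f c x)).sum) volume a b := by
  induction L with
  | nil => simpa using intervalIntegrable_const (c := (0:ℝ))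
  | cons c l ih =>
    simp only [List.map_cons, List.sum_cons]
    exact (h c (by simp)).add (ih (fun d hd => h d (by simp [hd])))

lemma intervalIntegral_list_sum {α : Type*} (L : List α) (f : α → ℝ → ℝ) (a b : ℝ)
    (h : ∀ c ∈ L, IntervalIntegrable (f c) volume a b) :
    (∫ x in a..b, (L.map (fun c => f c x)).sum)
      = (L.map (fun c => ∫ x in a..b, f c x)).sum := by
  induction L with
  | nil => simp
  | cons c l ih =>
    simp only [List.map_cons, List.sum_cons]
    rw [intervalIntegral.integral_add (h c (by simp))
      (intervalIntegrable_list_sum l f a b (fun d hd => h d (by simp [hd]))),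
      ih (fun d hd => h d (by simp [hd]))]

/-! ### The trig family `ψ` -/

noncomputable def psiFn (i : ℕ) (y : ℝ) : ℝ := Real.sin (y + i * (Real.pi / 2))

lemma psiFn_abs_le (i : ℕ) (y : ℝ) : |psiFn i y| ≤ 1 := abs_sin_le_one _

lemma hasDerivAt_psiFn (i : ℕ) (y : ℝ) : HasDerivAt (psiFn i) (psiFn (i+1) y) y := by
  have h : HasDerivAt (fun y : ℝ => Real.sin (y + i * (Real.pi / 2)))
      (Real.cos (y + i * (Real.pi / 2))) y := by
    refine ((Real.hasDerivAt_sin (y + i * (Real.pi / 2))).comp y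
      ((hasDerivAt_id y).add_const _)).congr_deriv ?_
    simp
  have he : psiFn (i+1) y = Real.cos (y + i * (Real.pi / 2)) := by
    unfold psiFn
    push_cast
    rw [show y + (i + 1) * (Real.pi/2) = (y + i * (Real.pi/2)) + Real.pi/2 by ring]
    rw [Real.sin_add_pi_div_two]
  rw [he]; exact h

lemma continuous_psiFn (i : ℕ) : Continuous (psiFn i) := by
  unfold psiFn; fun_prop

/-! ### Inner `t`-derivatives -/

lemma inner_deriv' (ℓ : ℕ) (θ : ℝ) :
    (fun t => iteratedDeriv ℓ (fun t' => phiFn t' θ) t)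
      = fun t => (-2 * (1 - Real.cos θ)) ^ ℓ * Real.exp (-2 * t * (1 - Real.cos θ)) := by
  have h : (fun t' => phiFn t' θ) = fun t' => Real.exp ((-2 * (1 - Real.cos θ)) * t') := by
    funext t'; unfold phiFn; congr 1; ring
  funext t
  rw [h, iteratedDeriv_exp_const_mul]
  ring_nf

/-! ### Structure of `θ`-derivatives -/

structure TrigTerm where
  c : ℝ
  p : ℕ
  s : ℕ
  r : ℕ
  q : ℕ

noncomputable def termVal (T : TrigTerm) (t θ : ℝ) : ℝ :=
  T.c * t ^ T.p * Real.sin θ ^ T.s * Real.cos θ ^ T.r * (1 - Real.cos θ) ^ T.q *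
    Real.exp (-2 * t * (1 - Real.cos θ))

def termD (T : TrigTerm) : List TrigTerm :=
  [⟨T.c * T.s, T.p, T.s - 1, T.r + 1, T.q⟩,
   ⟨-(T.c * T.r), T.p, T.s + 1, T.r - 1, T.q⟩,
   ⟨T.c * T.q, T.p, T.s + 1, T.r, T.q - 1⟩,
   ⟨-(2 * T.c), T.p + 1, T.s + 1, T.r, T.q⟩]

lemma continuous_termVal (T : TrigTerm) (t : ℝ) : Continuous (fun θ => termVal T t θ) := by
  unfold termVal; fun_prop

lemma hasDerivAt_termVal (T : TrigTerm) (t θ : ℝ) :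
    HasDerivAt (fun θ => termVal T t θ) (((termD T).map (fun T' => termVal T' t θ)).sum) θ := by
  have h1 : HasDerivAt (fun θ : ℝ => Real.sin θ ^ T.s)
      ((T.s : ℝ) * Real.sin θ ^ (T.s - 1) * Real.cos θ) θ := (Real.hasDerivAt_sin θ).pow T.s
  have h2 : HasDerivAt (fun θ : ℝ => Real.cos θ ^ T.r)
      ((T.r : ℝ) * Real.cos θ ^ (T.r - 1) * (-Real.sin θ)) θ := (Real.hasDerivAt_cos θ).pow T.r
  have h3 : HasDerivAt (fun θ : ℝ => (1 - Real.cos θ) ^ T.q)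
      ((T.q : ℝ) * (1 - Real.cos θ) ^ (T.q - 1) * (0 - -Real.sin θ)) θ :=
    ((hasDerivAt_const θ (1:ℝ)).sub (Real.hasDerivAt_cos θ)).pow T.q
  have h4 : HasDerivAt (fun θ : ℝ => Real.exp (-2 * t * (1 - Real.cos θ)))
      (Real.exp (-2 * t * (1 - Real.cos θ)) * ((-2 * t) * (0 - -Real.sin θ))) θ := by
    have hb : HasDerivAt (fun θ : ℝ => -2 * t * (1 - Real.cos θ))
        ((-2 * t) * (0 - -Real.sin θ)) θ :=
      (((hasDerivAt_const θ (1:ℝ)).sub (Real.hasDerivAt_cos θ)).const_mul (-2 * t))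
    exact hb.exp
  have h := ((((h1.const_mul (T.c * t ^ T.p)).mul h2).mul h3).mul h4)
  refine h.congr_deriv ?_
  simp only [termD, termVal, List.map_cons, List.map_nil, List.sum_cons, List.sum_nil, Pi.mul_apply]
  ring

lemma theta_structure (ℓ k : ℕ) : ∃ L : List TrigTerm,
    (∀ T ∈ L, 2 * ℓ + 2 * T.p ≤ T.s + 2 * T.q + k) ∧
    ∀ t θ : ℝ, phiMixedDeriv k ℓ t θ = (L.map (fun T => termVal T t θ)).sum := by
  have base : ∀ t θ : ℝ, (fun θ' => iteratedDeriv ℓ (fun t' => phiFn t' θ') t) θ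
      = termVal ⟨(-2:ℝ)^ℓ, 0, 0, 0, ℓ⟩ t θ := by
    intro t θ
    have h := congrFun (inner_deriv' ℓ θ) t
    show iteratedDeriv ℓ (fun t' => phiFn t' θ) t = _
    rw [h]
    simp only [termVal, pow_zero, mul_one, one_mul]
    rw [mul_pow]
  suffices h : ∀ k, ∃ L : List TrigTerm,
      (∀ T ∈ L, 2 * ℓ + 2 * T.p ≤ T.s + 2 * T.q + k) ∧
      ∀ t θ : ℝ, iteratedDeriv k (fun θ' => iteratedDeriv ℓ (fun t' => phiFn t' θ') t) θ
        = (L.map (fun T => termVal T t θ)).sum by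
    obtain ⟨L, hL1, hL2⟩ := h k
    exact ⟨L, hL1, fun t θ => hL2 t θ⟩
  intro k
  induction k with
  | zero =>
    refine ⟨[⟨(-2:ℝ)^ℓ, 0, 0, 0, ℓ⟩], by simp, fun t θ => ?_⟩
    rw [iteratedDeriv_zero]
    simpa using base t θ
  | succ k ih =>
    obtain ⟨L, hL1, hL2⟩ := ih
    refine ⟨L.flatMap termD, ?_, fun t θ => ?_⟩
    · intro T' hT'
      rw [List.mem_flatMap] at hT'
      obtain ⟨T, hT, hT'⟩ := hT'
      have := hL1 T hT
      simp only [termD, List.mem_cons, List.mem_singleton] at hT'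
      rcases hT' with h | h | h | h | h
      · subst h; dsimp only; omega
      · subst h; dsimp only; omega
      · subst h; dsimp only; omega
      · subst h; dsimp only; omega
      · exact absurd h List.not_mem_nil
    · rw [iteratedDeriv_succ]
      have hfun : iteratedDeriv k (fun θ' => iteratedDeriv ℓ (fun t' => phiFn t' θ') t)
          = fun θ => (L.map (fun T => termVal T t θ)).sum := funext (hL2 t)
      rw [hfun]
      have hd := hasDerivAt_list_sum L (fun T θ => termVal T t θ)
        (fun T => ((termD T).map (fun T' => termVal T' t θ)).sum) θ
        (fun T _ => hasDerivAt_termVal T t θ)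
      rw [hd.deriv, list_bind_sum]

lemma continuous_phiMixedDeriv (k ℓ : ℕ) (t : ℝ) :
    Continuous (fun θ => phiMixedDeriv k ℓ t θ) := by
  obtain ⟨L, _, hL⟩ := theta_structure ℓ k
  have : (fun θ => phiMixedDeriv k ℓ t θ)
      = fun θ => (L.map (fun T => termVal T t θ)).sum := funext (hL t)
  rw [this]
  exact myContinuous_list_sum L _ (fun T _ => continuous_termVal T t)

/-! ### Pointwise/gaussian bounds -/

lemma abs_termVal_le (T : TrigTerm) {t θ : ℝ} (ht : 1 ≤ t) (hθ1 : 0 ≤ θ) (hθ2 : θ ≤ Real.pi) :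
    |termVal T t θ| ≤ |T.c| * t ^ T.p * θ ^ (T.s + 2 * T.q)
      * Real.exp (-(4 / Real.pi ^ 2 * t) * θ ^ 2) := by
  have ht0 : (0:ℝ) ≤ t := le_trans zero_le_one ht
  have hcos : Real.cos θ ≤ 1 - 2 / Real.pi ^ 2 * θ ^ 2 :=
    Real.cos_le_one_sub_mul_cos_sq (by rwa [abs_of_nonneg hθ1])
  have hcos2 : 1 - θ ^ 2 / 2 ≤ Real.cos θ := Real.one_sub_sq_div_two_le_cos
  have hexp : Real.exp (-2 * t * (1 - Real.cos θ)) ≤ Real.exp (-(4 / Real.pi ^ 2 * t) * θ ^ 2) := by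
    apply Real.exp_le_exp.2
    have h2 : 2 / Real.pi ^ 2 * θ ^ 2 ≤ 1 - Real.cos θ := by linarith
    have h3 := mul_le_mul_of_nonneg_left h2 ht0
    ring_nf at h3 ⊢
    linarith
  unfold termVal
  rw [abs_mul, abs_mul, abs_mul, abs_mul, abs_mul]
  rw [Real.abs_exp]
  have h1 : |t ^ T.p| = t ^ T.p := abs_of_nonneg (pow_nonneg ht0 _)
  rw [h1]
  have hsin : |Real.sin θ| ^ T.s ≤ θ ^ T.s :=
    pow_le_pow_left₀ (abs_nonneg _) ((Real.abs_sin_le_abs).trans_eq (abs_of_nonneg hθ1)) _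
  have hcosb : |Real.cos θ| ^ T.r ≤ 1 :=
    pow_le_one₀ (abs_nonneg _) (Real.abs_cos_le_one θ)
  have h1c : |1 - Real.cos θ| ^ T.q ≤ (θ ^ 2) ^ T.q := by
    apply pow_le_pow_left₀ (abs_nonneg _)
    rw [abs_of_nonneg (by nlinarith [Real.neg_one_le_cos θ, Real.cos_le_one θ] : (0:ℝ) ≤ 1 - Real.cos θ)]
    nlinarith
  rw [abs_pow, abs_pow, abs_pow]
  calc |T.c| * t ^ T.p * |Real.sin θ| ^ T.s * |Real.cos θ| ^ T.r * |1 - Real.cos θ| ^ T.q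
        * Real.exp (-2 * t * (1 - Real.cos θ))
      ≤ |T.c| * t ^ T.p * θ ^ T.s * 1 * (θ ^ 2) ^ T.q
        * Real.exp (-(4 / Real.pi ^ 2 * t) * θ ^ 2) := by
        apply mul_le_mul _ hexp (Real.exp_nonneg _) (by positivity)
        apply mul_le_mul _ h1c (by positivity) (by positivity)
        apply mul_le_mul _ hcosb (by positivity) (by positivity)
        apply mul_le_mul_of_nonneg_left hsin (by positivity)
    _ = |T.c| * t ^ T.p * θ ^ (T.s + 2 * T.q) * Real.exp (-(4 / Real.pi ^ 2 * t) * θ ^ 2) := by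
        rw [pow_add, ← pow_mul]
        ring

lemma gauss_moment (w : ℕ) : ∃ A : ℝ, 0 < A ∧ ∀ t : ℝ, 1 ≤ t →
    (∫ θ in (0:ℝ)..Real.pi, θ ^ w * Real.exp (-(4 / Real.pi ^ 2 * t) * θ ^ 2))
      ≤ A * t ^ (-((w:ℝ) + 1) / 2) := by
  have hb0 : (0:ℝ) < 4 / Real.pi ^ 2 := by positivity
  refine ⟨(4 / Real.pi ^ 2) ^ (-((w:ℝ) + 1) / 2) * (1/2) * Real.Gamma (((w:ℝ) + 1) / 2),
    by positivity, fun t ht => ?_⟩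
  have ht0 : (0:ℝ) < t := lt_of_lt_of_le one_pos ht
  have hb : (0:ℝ) < 4 / Real.pi ^ 2 * t := by positivity
  have key : ∫ x in Set.Ioi (0:ℝ), x ^ (w:ℝ) * Real.exp (-(4 / Real.pi ^ 2 * t) * x ^ (2:ℝ))
      = (4 / Real.pi ^ 2 * t) ^ (-((w:ℝ) + 1) / 2) * (1/2) * Real.Gamma (((w:ℝ) + 1) / 2) :=
    integral_rpow_mul_exp_neg_mul_rpow two_pos (lt_of_lt_of_le neg_one_lt_zero (Nat.cast_nonneg w)) hb
  have hfun : ∀ x : ℝ, x ^ (w:ℝ) * Real.exp (-(4 / Real.pi ^ 2 * t) * x ^ (2:ℝ))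
      = x ^ w * Real.exp (-(4 / Real.pi ^ 2 * t) * x ^ 2) := by
    intro x
    rw [Real.rpow_natCast, show (2:ℝ) = ((2:ℕ):ℝ) by norm_num, Real.rpow_natCast]
  have hInt : IntegrableOn (fun x : ℝ => x ^ w * Real.exp (-(4 / Real.pi ^ 2 * t) * x ^ 2))
      (Set.Ioi (0:ℝ)) := by
    have h := integrableOn_rpow_mul_exp_neg_mul_sq hb (lt_of_lt_of_le neg_one_lt_zero (Nat.cast_nonneg w))
    have : (fun x : ℝ => x ^ (w:ℝ) * Real.exp (-(4 / Real.pi ^ 2 * t) * x ^ 2))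
        = fun x : ℝ => x ^ w * Real.exp (-(4 / Real.pi ^ 2 * t) * x ^ 2) := by
      funext x; rw [Real.rpow_natCast]
    rwa [this] at h
  rw [intervalIntegral.integral_of_le Real.pi_pos.le]
  have hmono : ∫ θ in Set.Ioc (0:ℝ) Real.pi, θ ^ w * Real.exp (-(4 / Real.pi ^ 2 * t) * θ ^ 2)
      ≤ ∫ x in Set.Ioi (0:ℝ), x ^ w * Real.exp (-(4 / Real.pi ^ 2 * t) * x ^ 2) := by
    apply setIntegral_mono_set hInt
    · filter_upwards [ae_restrict_mem measurableSet_Ioi] with x hx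
      have : (0:ℝ) < x := hx
      positivity
    · exact HasSubset.Subset.eventuallyLE Set.Ioc_subset_Ioi_self
  refine hmono.trans ?_
  simp only [hfun] at key
  rw [key, Real.mul_rpow (le_of_lt hb0) ht0.le]
  ring_nf
  exact le_refl _

/-! ### The moment bound -/

lemma moment_bound (k ℓ n : ℕ) : ∃ B : ℝ, 0 < B ∧ ∀ t : ℝ, 1 ≤ t →
    (∫ θ in (0:ℝ)..Real.pi, |phiMixedDeriv k ℓ t θ| * θ ^ n)
      ≤ B * t ^ (((k:ℝ) - 2 * ℓ - n - 1) / 2) := by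
  obtain ⟨L, hW, hRep⟩ := theta_structure ℓ k
  have hA : ∀ T : TrigTerm, ∃ A : ℝ, 0 < A ∧ ∀ t : ℝ, 1 ≤ t →
      (∫ θ in (0:ℝ)..Real.pi, θ ^ (n + (T.s + 2 * T.q))
        * Real.exp (-(4 / Real.pi ^ 2 * t) * θ ^ 2))
        ≤ A * t ^ (-((↑(n + (T.s + 2 * T.q)):ℝ) + 1) / 2) := fun T =>
    gauss_moment (n + (T.s + 2 * T.q))
  choose A hA1 hA2 using hA
  refine ⟨(L.map (fun T => |T.c| * A T)).sum + 1, by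
    have : (0:ℝ) ≤ (L.map (fun T => |T.c| * A T)).sum := by
      apply List.sum_nonneg
      intro a ha
      simp only [List.mem_map] at ha
      obtain ⟨T, _, rfl⟩ := ha
      exact mul_nonneg (abs_nonneg _) (hA1 T).le
    linarith, fun t ht => ?_⟩
  have ht0 : (0:ℝ) < t := lt_of_lt_of_le one_pos ht
  -- bound functions
  set bnd : TrigTerm → ℝ → ℝ := fun T θ =>
    |T.c| * t ^ T.p * θ ^ (n + (T.s + 2 * T.q)) * Real.exp (-(4 / Real.pi ^ 2 * t) * θ ^ 2)
    with hbnd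
  have hcont : ∀ T : TrigTerm, Continuous (bnd T) := by
    intro T; rw [hbnd]; fun_prop
  have step1 : (∫ θ in (0:ℝ)..Real.pi, |phiMixedDeriv k ℓ t θ| * θ ^ n)
      ≤ ∫ θ in (0:ℝ)..Real.pi, (L.map (fun T => bnd T θ)).sum := by
    apply intervalIntegral.integral_mono_on Real.pi_pos.le
    · exact (((continuous_phiMixedDeriv k ℓ t).abs.mul (continuous_pow n))).intervalIntegrable _ _
    · exact (myContinuous_list_sum L bnd (fun T _ => hcont T)).intervalIntegrable _ _  -- may need eta
    · intro θ hθ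
      obtain ⟨hθ1, hθ2⟩ := hθ
      have habs : |phiMixedDeriv k ℓ t θ| ≤ (L.map (fun T => |termVal T t θ|)).sum := by
        rw [hRep t θ]
        exact list_abs_sum_le L _ _ (fun T _ => le_refl _)
      calc |phiMixedDeriv k ℓ t θ| * θ ^ n
          ≤ (L.map (fun T => |termVal T t θ|)).sum * θ ^ n :=
            mul_le_mul_of_nonneg_right habs (by positivity)
        _ = (L.map (fun T => |termVal T t θ| * θ ^ n)).sum := by
            rw [← List.sum_map_mul_right]
        _ ≤ (L.map (fun T => bnd T θ)).sum := by
            apply list_sum_le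
            intro T _
            have h := abs_termVal_le T ht hθ1 hθ2
            calc |termVal T t θ| * θ ^ n
                ≤ (|T.c| * t ^ T.p * θ ^ (T.s + 2 * T.q)
                    * Real.exp (-(4 / Real.pi ^ 2 * t) * θ ^ 2)) * θ ^ n :=
                  mul_le_mul_of_nonneg_right h (by positivity)
              _ = bnd T θ := by rw [hbnd]; simp only; rw [pow_add]; ring
  have step2 : (∫ θ in (0:ℝ)..Real.pi, (L.map (fun T => bnd T θ)).sum)
      = (L.map (fun T => ∫ θ in (0:ℝ)..Real.pi, bnd T θ)).sum :=
    intervalIntegral_list_sum L bnd 0 Real.pi (fun T _ => (hcont T).intervalIntegrable _ _)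
  have step3 : ∀ T ∈ L, (∫ θ in (0:ℝ)..Real.pi, bnd T θ)
      ≤ (|T.c| * A T) * t ^ (((k:ℝ) - 2 * ℓ - n - 1) / 2) := by
    intro T hT
    have heq : (∫ θ in (0:ℝ)..Real.pi, bnd T θ)
        = (|T.c| * t ^ T.p) * ∫ θ in (0:ℝ)..Real.pi, θ ^ (n + (T.s + 2 * T.q))
            * Real.exp (-(4 / Real.pi ^ 2 * t) * θ ^ 2) := by
      rw [← intervalIntegral.integral_const_mul]
      congr 1; funext θ; rw [hbnd]; ring
    rw [heq]
    have h2 := hA2 T t ht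
    have hc : (0:ℝ) ≤ |T.c| * t ^ T.p := by positivity
    calc (|T.c| * t ^ T.p) * ∫ θ in (0:ℝ)..Real.pi, θ ^ (n + (T.s + 2 * T.q))
            * Real.exp (-(4 / Real.pi ^ 2 * t) * θ ^ 2)
        ≤ (|T.c| * t ^ T.p) * (A T * t ^ (-((↑(n + (T.s + 2 * T.q)):ℝ) + 1) / 2)) :=
          mul_le_mul_of_nonneg_left h2 hc
      _ = (|T.c| * A T) * (t ^ (T.p:ℝ) * t ^ (-((↑(n + (T.s + 2 * T.q)):ℝ) + 1) / 2)) := by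
          rw [← Real.rpow_natCast t T.p]; ring
      _ = (|T.c| * A T) * t ^ ((T.p:ℝ) + (-((↑(n + (T.s + 2 * T.q)):ℝ) + 1) / 2)) := by
          rw [← Real.rpow_add ht0]
      _ ≤ (|T.c| * A T) * t ^ (((k:ℝ) - 2 * ℓ - n - 1) / 2) := by
          apply mul_le_mul_of_nonneg_left _ (mul_nonneg (abs_nonneg _) (hA1 T).le)
          apply Real.rpow_le_rpow_of_exponent_le ht
          have hw := hW T hT
          have hw' : (2 * ℓ + 2 * T.p : ℝ) ≤ (T.s : ℝ) + 2 * T.q + k := by exact_mod_cast hw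
          push_cast
          linarith
  calc (∫ θ in (0:ℝ)..Real.pi, |phiMixedDeriv k ℓ t θ| * θ ^ n)
      ≤ ∫ θ in (0:ℝ)..Real.pi, (L.map (fun T => bnd T θ)).sum := step1
    _ = (L.map (fun T => ∫ θ in (0:ℝ)..Real.pi, bnd T θ)).sum := step2
    _ ≤ (L.map (fun T => (|T.c| * A T) * t ^ (((k:ℝ) - 2 * ℓ - n - 1) / 2))).sum :=
        list_sum_le _ _ _ step3
    _ = (L.map (fun T => |T.c| * A T)).sum * t ^ (((k:ℝ) - 2 * ℓ - n - 1) / 2) := by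
        rw [← List.sum_map_mul_right]
    _ ≤ ((L.map (fun T => |T.c| * A T)).sum + 1) * t ^ (((k:ℝ) - 2 * ℓ - n - 1) / 2) := by
        apply mul_le_mul_of_nonneg_right _ (by positivity)
        linarith

/-! ### The parametric integral `J` -/

noncomputable def Jfun (k ℓ n i : ℕ) (t x : ℝ) : ℝ :=
  ∫ θ in (0:ℝ)..Real.pi, phiMixedDeriv k ℓ t θ * θ ^ n * psiFn i (x * θ)

lemma hasDerivAt_Jfun (k ℓ n i : ℕ) (t x₀ : ℝ) :
    HasDerivAt (fun x => Jfun k ℓ n i t x) (Jfun k ℓ (n+1) (i+1) t x₀) x₀ := by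
  have cont := continuous_phiMixedDeriv k ℓ t
  have h := intervalIntegral.hasDerivAt_integral_of_dominated_loc_of_deriv_le
    (F := fun (x θ : ℝ) => phiMixedDeriv k ℓ t θ * θ ^ n * psiFn i (x * θ))
    (F' := fun (x θ : ℝ) => phiMixedDeriv k ℓ t θ * θ ^ (n+1) * psiFn (i+1) (x * θ))
    (bound := fun θ => |phiMixedDeriv k ℓ t θ| * θ ^ (n+1))
    (a := 0) (b := Real.pi) (μ := MeasureTheory.volume) (x₀ := x₀) (s := Metric.ball x₀ 1) (Metric.ball_mem_nhds x₀ one_pos)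
    ?_ ?_ ?_ ?_ ?_ ?_
  · exact h.2
  · filter_upwards with x
    exact ((cont.mul (continuous_pow n)).mul
      ((continuous_psiFn i).comp (continuous_const.mul continuous_id))).aestronglyMeasurable
  · exact ((cont.mul (continuous_pow n)).mul
      ((continuous_psiFn i).comp (continuous_const.mul continuous_id))).intervalIntegrable _ _
  · exact ((cont.mul (continuous_pow (n+1))).mul
      ((continuous_psiFn (i+1)).comp (continuous_const.mul continuous_id))).aestronglyMeasurable
  · filter_upwards with θ hθ x _
    have hθ' : 0 < θ := by
      rw [Set.uIoc_of_le Real.pi_pos.le] at hθ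
      exact hθ.1
    rw [Real.norm_eq_abs, abs_mul, abs_mul]
    have h1 : |θ ^ (n+1)| = θ ^ (n+1) := abs_of_nonneg (by positivity)
    rw [h1]
    calc |phiMixedDeriv k ℓ t θ| * θ ^ (n+1) * |psiFn (i+1) (x * θ)|
        ≤ |phiMixedDeriv k ℓ t θ| * θ ^ (n+1) * 1 :=
          mul_le_mul_of_nonneg_left (psiFn_abs_le _ _)
            (mul_nonneg (abs_nonneg _) (pow_nonneg hθ'.le _))
      _ = |phiMixedDeriv k ℓ t θ| * θ ^ (n+1) := by ring
  · exact (cont.abs.mul (continuous_pow (n+1))).intervalIntegrable _ _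
  · filter_upwards with θ hθ x _
    have hd := (hasDerivAt_psiFn i (x * θ)).comp x ((hasDerivAt_id x).mul_const θ)
    have hd2 := hd.const_mul (phiMixedDeriv k ℓ t θ * θ ^ n)
    have heq : phiMixedDeriv k ℓ t θ * θ ^ (n+1) * psiFn (i+1) (x * θ)
        = phiMixedDeriv k ℓ t θ * θ ^ n * (psiFn (i+1) (x * θ) * (1 * θ)) := by ring
    rw [heq]
    exact hd2

lemma abs_Jfun_le (k ℓ n i : ℕ) (t x : ℝ) :
    |Jfun k ℓ n i t x| ≤ ∫ θ in (0:ℝ)..Real.pi, |phiMixedDeriv k ℓ t θ| * θ ^ n := by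
  have cont := continuous_phiMixedDeriv k ℓ t
  refine (intervalIntegral.abs_integral_le_integral_abs Real.pi_pos.le).trans ?_
  apply intervalIntegral.integral_mono_on Real.pi_pos.le
  · exact ((cont.mul (continuous_pow n)).mul
      ((continuous_psiFn i).comp (continuous_const.mul continuous_id))).abs.intervalIntegrable _ _
  · exact (cont.abs.mul (continuous_pow n)).intervalIntegrable _ _
  · intro θ hθ
    rw [abs_mul, abs_mul]
    have h1 : |θ ^ n| = θ ^ n := abs_of_nonneg (pow_nonneg hθ.1 _)
    rw [h1]
    calc |phiMixedDeriv k ℓ t θ| * θ ^ n * |psiFn i (x * θ)|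
        ≤ |phiMixedDeriv k ℓ t θ| * θ ^ n * 1 :=
          mul_le_mul_of_nonneg_left (psiFn_abs_le _ _)
            (mul_nonneg (abs_nonneg _) (pow_nonneg hθ.1 _))
      _ = |phiMixedDeriv k ℓ t θ| * θ ^ n := by ring

/-! ### Structure of `x`-derivatives of `gFn` -/

lemma my_abs_zpow (x : ℝ) (m : ℤ) : |x ^ m| = |x| ^ m := by
  rcases m with n | n
  · simp [abs_pow]
  · simp [zpow_negSucc, abs_pow, abs_inv]

noncomputable def xval (k ℓ : ℕ) (T : ℝ × ℤ × ℕ × ℕ) (t x : ℝ) : ℝ :=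
  T.1 * x ^ T.2.1 * Jfun k ℓ T.2.2.1 T.2.2.2 t x

lemma PhiFn_eq_psiFn (k : ℕ) : PhiFn k = psiFn (if k % 2 = 1 then 0 else 1) := by
  funext y
  unfold PhiFn psiFn
  by_cases h : k % 2 = 1 <;> simp [h, Real.sin_add_pi_div_two]

lemma x_structure (j k ℓ : ℕ) : ∃ L : List (ℝ × ℤ × ℕ × ℕ),
    (∀ T ∈ L, T.2.2.1 ≤ j ∧ T.2.1 = -(k:ℤ) - (j:ℤ) + (T.2.2.1:ℤ)) ∧
    ∀ t x : ℝ, x ≠ 0 → iteratedDeriv j (fun x' => gFn ℓ k t x') x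
      = (L.map (fun T => xval k ℓ T t x)).sum := by
  induction j with
  | zero =>
    refine ⟨[((-1 : ℝ) ^ ((k + 1) / 2) / Real.pi, -(k:ℤ), 0, if k % 2 = 1 then 0 else 1)],
      by simp, fun t x hx => ?_⟩
    rw [iteratedDeriv_zero]
    show gFn ℓ k t x = _
    unfold gFn xval Jfun
    simp only [List.map_cons, List.map_nil, List.sum_cons, List.sum_nil, add_zero]
    rw [PhiFn_eq_psiFn k]
    have hconst : ((-1 : ℝ) ^ ((k + 1) / 2) / (Real.pi * x ^ k))
        = ((-1 : ℝ) ^ ((k + 1) / 2) / Real.pi) * x ^ (-(k:ℤ)) := by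
      rw [zpow_neg, zpow_natCast]
      field_simp
    rw [hconst]
    congr 1
    apply intervalIntegral.integral_congr
    intro θ _
    simp [pow_zero]
  | succ j ih =>
    obtain ⟨L, hL1, hL2⟩ := ih
    refine ⟨L.flatMap (fun T => [(T.1 * (T.2.1 : ℝ), T.2.1 - 1, T.2.2.1, T.2.2.2),
        (T.1, T.2.1, T.2.2.1 + 1, T.2.2.2 + 1)]), ?_, fun t x hx => ?_⟩
    · intro T' hT'
      rw [List.mem_flatMap] at hT'
      obtain ⟨T, hT, hT'⟩ := hT'
      obtain ⟨h1, h2⟩ := hL1 T hT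
      simp only [List.mem_cons, List.mem_singleton] at hT'
      rcases hT' with h | h | h
      · subst h
        refine ⟨by simp; omega, by simp; omega⟩
      · subst h
        refine ⟨by simp; omega, by simp; push_cast; omega⟩
      · exact absurd h List.not_mem_nil
    · rw [iteratedDeriv_succ]
      have hev : iteratedDeriv j (fun x' => gFn ℓ k t x')
          =ᶠ[nhds x] (fun y => (L.map (fun T => xval k ℓ T t y)).sum) := by
        filter_upwards [eventually_ne_nhds hx] with y hy
        exact hL2 t y hy
      rw [hev.deriv_eq]
      have hd := hasDerivAt_list_sum L (fun T y => xval k ℓ T t y)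
        (fun T => (([(T.1 * (T.2.1 : ℝ), T.2.1 - 1, T.2.2.1, T.2.2.2),
          (T.1, T.2.1, T.2.2.1 + 1, T.2.2.2 + 1)] : List (ℝ × ℤ × ℕ × ℕ)).map
            (fun T' => xval k ℓ T' t x)).sum) x ?_
      · rw [hd.deriv, list_bind_sum]
      · intro T _
        have hz : HasDerivAt (fun y : ℝ => y ^ T.2.1) ((T.2.1 : ℝ) * x ^ (T.2.1 - 1)) x :=
          hasDerivAt_zpow T.2.1 x (Or.inl hx)
        have hJ := hasDerivAt_Jfun k ℓ T.2.2.1 T.2.2.2 t x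
        have h := (hz.const_mul T.1).mul hJ
        refine h.congr_deriv ?_
        simp only [xval, List.map_cons, List.map_nil, List.sum_cons, List.sum_nil, add_zero]
        ring

/-! ### The key elementary inequality -/

lemma interp_ineq {u v : ℝ} (hu : 0 < u) (hv : 0 < v) {a b : ℝ} (ha : 0 ≤ a) (hb : 0 ≤ b) :
    u ^ a * v ^ b ≤ u ^ (a + b) + v ^ (a + b) := by
  rcases le_total u v with h | h
  · calc u ^ a * v ^ b ≤ v ^ a * v ^ b :=
        mul_le_mul_of_nonneg_right (Real.rpow_le_rpow hu.le h ha) (Real.rpow_nonneg hv.le _)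
      _ = v ^ (a + b) := by rw [← Real.rpow_add hv]
      _ ≤ u ^ (a + b) + v ^ (a + b) := le_add_of_nonneg_left (Real.rpow_nonneg hu.le _)
  · calc u ^ a * v ^ b ≤ u ^ a * u ^ b :=
        mul_le_mul_of_nonneg_left (Real.rpow_le_rpow hv.le h hb) (Real.rpow_nonneg hu.le _)
      _ = u ^ (a + b) := by rw [← Real.rpow_add hu]
      _ ≤ u ^ (a + b) + v ^ (a + b) := le_add_of_nonneg_right (Real.rpow_nonneg hv.le _)

lemma key_ineq (k j ℓ n : ℕ) (hn : n ≤ j) {t X : ℝ} (ht : 1 ≤ t) (hX : 0 < X) :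
    X ^ (-(k:ℤ) - (j:ℤ) + (n:ℤ)) * t ^ (((k:ℝ) - 2*ℓ - n - 1)/2)
      ≤ X ^ (-(j:ℝ)) * t ^ (-((ℓ:ℝ) + 1/2)) * (X / Real.sqrt t) ^ (-(k:ℝ))
        + t ^ (-((ℓ:ℝ) + (j:ℝ)/2 + 1/2)) * (X / Real.sqrt t) ^ (-(k:ℝ)) := by
  have ht0 : (0:ℝ) < t := lt_of_lt_of_le one_pos ht
  have hr : (X / Real.sqrt t) ^ (-(k:ℝ)) = X ^ (-(k:ℝ)) * t ^ ((k:ℝ)/2) := by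
    rw [Real.sqrt_eq_rpow, Real.div_rpow hX.le (Real.rpow_nonneg ht0.le _),
      ← Real.rpow_mul ht0.le]
    rw [div_eq_mul_inv, ← Real.rpow_neg ht0.le]
    congr 1
    ring
  have hXsplit : X ^ (-(k:ℤ) - (j:ℤ) + (n:ℤ)) = X ^ (-(k:ℝ)) * X ^ (-((j:ℝ) - (n:ℝ))) := by
    rw [← Real.rpow_intCast X, ← Real.rpow_add hX]
    congr 1
    push_cast
    ring
  have htsplit : t ^ (((k:ℝ) - 2*ℓ - n - 1)/2)
      = t ^ ((k:ℝ)/2) * t ^ (-((ℓ:ℝ) + 1/2)) * t ^ (-(n:ℝ)/2) := by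
    rw [← Real.rpow_add ht0, ← Real.rpow_add ht0]
    congr 1
    ring
  rw [hXsplit, htsplit, hr]
  have hkey : X ^ (-((j:ℝ) - (n:ℝ))) * t ^ (-(n:ℝ)/2) ≤ X ^ (-(j:ℝ)) + t ^ (-(j:ℝ)/2) := by
    have e1 : X ^ (-((j:ℝ) - (n:ℝ))) = (X⁻¹) ^ ((j:ℝ) - (n:ℝ)) := by
      rw [Real.inv_rpow hX.le, ← Real.rpow_neg hX.le]
    have e2 : t ^ (-(n:ℝ)/2) = (t ^ (-(1:ℝ)/2)) ^ ((n:ℝ)) := by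
      rw [← Real.rpow_mul ht0.le]
      congr 1
      ring
    have e3 : X ^ (-(j:ℝ)) = (X⁻¹) ^ ((j:ℝ)) := by
      rw [Real.inv_rpow hX.le, ← Real.rpow_neg hX.le]
    have e4 : t ^ (-(j:ℝ)/2) = (t ^ (-(1:ℝ)/2)) ^ ((j:ℝ)) := by
      rw [← Real.rpow_mul ht0.le]
      congr 1
      ring
    rw [e1, e2, e3, e4]
    have h := interp_ineq (inv_pos.2 hX) (Real.rpow_pos_of_pos ht0 (-(1:ℝ)/2))
      (show (0:ℝ) ≤ (j:ℝ) - (n:ℝ) by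
        have hc : (n:ℝ) ≤ (j:ℝ) := Nat.cast_le.mpr hn
        linarith)
      (show (0:ℝ) ≤ (n:ℝ) by positivity)
    rw [show (j:ℝ) - (n:ℝ) + (n:ℝ) = (j:ℝ) by ring] at h
    exact h
  calc X ^ (-(k:ℝ)) * X ^ (-((j:ℝ) - (n:ℝ)))
        * (t ^ ((k:ℝ)/2) * t ^ (-((ℓ:ℝ) + 1/2)) * t ^ (-(n:ℝ)/2))
      = (X ^ (-(k:ℝ)) * t ^ ((k:ℝ)/2) * t ^ (-((ℓ:ℝ) + 1/2)))
          * (X ^ (-((j:ℝ) - (n:ℝ))) * t ^ (-(n:ℝ)/2)) := by ring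
    _ ≤ (X ^ (-(k:ℝ)) * t ^ ((k:ℝ)/2) * t ^ (-((ℓ:ℝ) + 1/2)))
          * (X ^ (-(j:ℝ)) + t ^ (-(j:ℝ)/2)) := by
        apply mul_le_mul_of_nonneg_left hkey
        positivity
    _ = X ^ (-(j:ℝ)) * t ^ (-((ℓ:ℝ) + 1/2)) * (X ^ (-(k:ℝ)) * t ^ ((k:ℝ)/2))
          + (t ^ (-((ℓ:ℝ) + 1/2)) * t ^ (-(j:ℝ)/2)) * (X ^ (-(k:ℝ)) * t ^ ((k:ℝ)/2)) := by ring
    _ = X ^ (-(j:ℝ)) * t ^ (-((ℓ:ℝ) + 1/2)) * (X ^ (-(k:ℝ)) * t ^ ((k:ℝ)/2))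
          + t ^ (-((ℓ:ℝ) + (j:ℝ)/2 + 1/2)) * (X ^ (-(k:ℝ)) * t ^ ((k:ℝ)/2)) := by
        rw [← Real.rpow_add ht0]
        ring_nf


/-- For every `j ∈ ℕ`, `k ≥ 1`, `ℓ ∈ ℕ` there is `C > 0` such that for all `t ≥ 1` and
`x ∈ ℝ \ {0}`:
`|∂_x^j g_{t,k}(x)| ≤ C (|x|^{-j} t^{-(ℓ+1/2)} (|x|/√t)^{-k} + t^{-(ℓ+j/2+1/2)} (|x|/√t)^{-k})`. -/
theorem stmt6 (j k ℓ : ℕ) (hk : 1 ≤ k) :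
    ∃ C : ℝ, 0 < C ∧ ∀ (t : ℝ), 1 ≤ t → ∀ (x : ℝ), x ≠ 0 →
      |iteratedDeriv j (fun x' => gFn ℓ k t x') x| ≤
        C * (|x| ^ (-(j : ℝ)) * t ^ (-((ℓ : ℝ) + 1/2)) * (|x| / Real.sqrt t) ^ (-(k : ℝ))
            + t ^ (-((ℓ : ℝ) + (j : ℝ)/2 + 1/2)) * (|x| / Real.sqrt t) ^ (-(k : ℝ))) := by
  obtain ⟨L, hL1, hL2⟩ := x_structure j k ℓ
  choose B hB1 hB2 using moment_bound k ℓ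
  have hsum0 : (0:ℝ) ≤ (L.map (fun T => |T.1| * B T.2.2.1)).sum := by
    apply List.sum_nonneg
    intro a ha
    simp only [List.mem_map] at ha
    obtain ⟨T, _, rfl⟩ := ha
    exact mul_nonneg (abs_nonneg _) (hB1 _).le
  refine ⟨(L.map (fun T => |T.1| * B T.2.2.1)).sum + 1, by linarith, fun t ht x hx => ?_⟩
  have ht0 : (0:ℝ) < t := lt_of_lt_of_le one_pos ht
  have hX : 0 < |x| := abs_pos.2 hx
  set R : ℝ := |x| ^ (-(j : ℝ)) * t ^ (-((ℓ : ℝ) + 1/2)) * (|x| / Real.sqrt t) ^ (-(k : ℝ))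
      + t ^ (-((ℓ : ℝ) + (j : ℝ)/2 + 1/2)) * (|x| / Real.sqrt t) ^ (-(k : ℝ)) with hRdef
  have hsq : (0:ℝ) < Real.sqrt t := Real.sqrt_pos.2 ht0
  have hR0 : 0 ≤ R := by
    rw [hRdef]
    have h1 : (0:ℝ) < |x| / Real.sqrt t := by positivity
    positivity
  rw [hL2 t x hx]
  calc |(L.map (fun T => xval k ℓ T t x)).sum|
      ≤ (L.map (fun T => |T.1| * B T.2.2.1 * R)).sum := by
        apply list_abs_sum_le
        intro T hT
        obtain ⟨hn, hm⟩ := hL1 T hT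
        have hJ : |Jfun k ℓ T.2.2.1 T.2.2.2 t x|
            ≤ B T.2.2.1 * t ^ (((k:ℝ) - 2 * ℓ - T.2.2.1 - 1) / 2) :=
          (abs_Jfun_le k ℓ T.2.2.1 T.2.2.2 t x).trans (hB2 T.2.2.1 t ht)
        calc |xval k ℓ T t x|
            = |T.1| * |x| ^ T.2.1 * |Jfun k ℓ T.2.2.1 T.2.2.2 t x| := by
              rw [xval, abs_mul, abs_mul, my_abs_zpow]
          _ ≤ |T.1| * |x| ^ T.2.1 * (B T.2.2.1 * t ^ (((k:ℝ) - 2 * ℓ - T.2.2.1 - 1) / 2)) := by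
              exact mul_le_mul_of_nonneg_left hJ
                (mul_nonneg (abs_nonneg _) (zpow_nonneg (abs_nonneg _) _))
          _ = (|T.1| * B T.2.2.1)
              * (|x| ^ T.2.1 * t ^ (((k:ℝ) - 2 * ℓ - T.2.2.1 - 1) / 2)) := by ring
          _ ≤ (|T.1| * B T.2.2.1) * R := by
              apply mul_le_mul_of_nonneg_left _ (mul_nonneg (abs_nonneg _) (hB1 _).le)
              rw [hm, hRdef]
              exact key_ineq k j ℓ T.2.2.1 hn ht hX
    _ = (L.map (fun T => |T.1| * B T.2.2.1)).sum * R := by rw [← List.sum_map_mul_right]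
    _ ≤ ((L.map (fun T => |T.1| * B T.2.2.1)).sum + 1) * R := by
        apply mul_le_mul_of_nonneg_right _ hR0
        linarith
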